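/- Let 0 < λ' < λ and let 0 ≤ i < j ≤ K_λ with ‖Y − (PY)_j‖ > 0. If ‖Y − (PY)_j‖²/(nm − λj) ≤ ‖Y − (PY)_i‖²/(nm − λi), then ‖Y − (PY)_j‖²/(nm − λ'j) < ‖Y − (PY)_i‖²/(nm − λ'i). Consequently, the selected ranks are monotone in the tuning parameter: if k̂_λ := Σ_{k=1}^{K_λ} 1{d_k²(PY) ≥ λ‖Y−(PY)_k‖²/(nm−λk)} and k̂_{λ'} is defined analogously with λ', then k̂_λ ≤ k̂_{λ'}. -/

import Mathlib

open scoped BigOperators NNReal ENNReal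
open Classical MeasureTheory ProbabilityTheory

noncomputable section

/-- Squared Frobenius (Hilbert–Schmidt) norm of a real matrix. -/
def frob2 {n m : ℕ} (M : Matrix (Fin n) (Fin m) ℝ) : ℝ :=
  ∑ i, ∑ j, (M i j) ^ 2

/-- `sval M k` is the `k`-th largest singular value of `M` (1-based indexing),
i.e. the square root of the `k`-th largest eigenvalue of `Mᴴ * M`; by convention
it is `0` for `k = 0` and for `k > m`. -/
def sval {n m : ℕ} (M : Matrix (Fin n) (Fin m) ℝ) (k : ℕ) : ℝ :=
  if h : 1 ≤ k ∧ k ≤ m then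
    Real.sqrt ((Matrix.conjTranspose_eq_transpose_of_trivial M ▸ Matrix.isHermitian_conjTranspose_mul_self M : (M.transpose * M).IsHermitian).eigenvalues
      (Tuple.sort (Matrix.conjTranspose_eq_transpose_of_trivial M ▸ Matrix.isHermitian_conjTranspose_mul_self M : (M.transpose * M).IsHermitian).eigenvalues ⟨m - k, by omega⟩))
  else 0

/-- A best rank-`k` approximation of `M` in Frobenius norm (rank-`k` truncated SVD),
with the convention that the rank-`0` truncation is `0`. -/
def trunc {n m : ℕ} (M : Matrix (Fin n) (Fin m) ℝ) (k : ℕ) :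
    Matrix (Fin n) (Fin m) ℝ :=
  if k = 0 then 0
  else Classical.epsilon fun B : Matrix (Fin n) (Fin m) ℝ =>
    B.rank ≤ k ∧ ∀ C : Matrix (Fin n) (Fin m) ℝ, C.rank ≤ k → frob2 (M - B) ≤ frob2 (M - C)

/-- `K_λ = ⌊(nm-1)/λ⌋ ∧ q ∧ m`. -/
def Kfun (n m q : ℕ) (lam : ℝ) : ℕ :=
  min (min (Nat.floor ((((n * m : ℕ) : ℝ) - 1) / lam)) q) m

/-- `σ̂_k² = ‖Y - (PY)_k‖² / (nm - λ k)`. -/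
def sighat2 {n m : ℕ} (Y : Matrix (Fin n) (Fin m) ℝ)
    (P : Matrix (Fin n) (Fin n) ℝ) (lam : ℝ) (k : ℕ) : ℝ :=
  frob2 (Y - trunc (P * Y) k) / (((n * m : ℕ) : ℝ) - lam * k)

/-- The selected rank `k̂ = ∑_{k=1}^{K_λ} 1{d_k²(PY) ≥ λ σ̂_k²}`,
which minimizes `σ̂_k²` over `{0, 1, …, K_λ}`. -/
def khat {n m : ℕ} (Y : Matrix (Fin n) (Fin m) ℝ)
    (P : Matrix (Fin n) (Fin n) ℝ) (q : ℕ) (lam : ℝ) : ℕ :=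
  ∑ k ∈ Finset.Icc 1 (Kfun n m q lam),
    if lam * sighat2 Y P lam k ≤ (sval (P * Y) k) ^ 2 then 1 else 0

/-
Write N = nm, a = ‖Y - (PY)_j‖² and b = ‖Y - (PY)_i‖². Lowering λ to λ' raises the cross-multiplied
hypothesis a (N - λi) ≤ b (N - λj) by (λ - λ') a i on the left and by (λ - λ') b j on the right, and
a i < b j since a ≤ b and i < j. For the ranks, λ ↦ λ ‖Y - (PY)_k‖² / (N - λk) is increasing, so each
indicator in k̂_λ can only switch on as λ decreases, while K_λ can only grow.
-/

lemma frob2_nonneg {n m : ℕ} (M : Matrix (Fin n) (Fin m) ℝ) : 0 ≤ frob2 M :=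
  Finset.sum_nonneg fun _ _ => Finset.sum_nonneg fun _ _ => sq_nonneg _

lemma div_sub_mul_lt_div_sub_mul_of_le {N l l' a b x y : ℝ} (hl : 0 ≤ l) (hl' : l' < l)
    (hx : 0 ≤ x) (hxy : x < y) (hy : l * y < N) (ha : 0 < a)
    (h : a / (N - l * y) ≤ b / (N - l * x)) : a / (N - l' * y) < b / (N - l' * x) := by
  have hDy : 0 < N - l * y := by linarith
  have hDx : 0 < N - l * x := by nlinarith
  rw [div_le_div_iff₀ hDy hDx] at h
  rw [div_lt_div_iff₀ (by nlinarith) (by nlinarith)]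
  have hab : a ≤ b := by
    by_contra! hba
    nlinarith [mul_lt_mul_of_pos_right hba hDy, mul_le_mul_of_nonneg_left
      (show N - l * y ≤ N - l * x by nlinarith) ha.le]
  have hax : a * x < b * y :=
    calc a * x ≤ b * x := mul_le_mul_of_nonneg_right hab hx
      _ < b * y := mul_lt_mul_of_pos_left hxy (ha.trans_le hab)
  nlinarith [mul_lt_mul_of_pos_left hax (sub_pos.2 hl')]

lemma mul_div_sub_mul_le_of_le {N c l l' k : ℝ} (hN : 0 ≤ N) (hc : 0 ≤ c) (hk : 0 ≤ k)
    (hle : l' ≤ l) (hlk : l * k < N) : l' * (c / (N - l' * k)) ≤ l * (c / (N - l * k)) := by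
  rw [← mul_div_assoc, ← mul_div_assoc, div_le_div_iff₀ (by nlinarith) (by linarith)]
  nlinarith [mul_nonneg (mul_nonneg hc hN) (sub_nonneg.2 hle)]

lemma mul_lt_of_le_Kfun {n m q k : ℕ} {lam : ℝ} (hlam : 0 < lam) (hk : k ≠ 0)
    (hkK : k ≤ Kfun n m q lam) : lam * k < ((n * m : ℕ) : ℝ) := by
  have hfloor : k ≤ ⌊(((n * m : ℕ) : ℝ) - 1) / lam⌋₊ :=
    hkK.trans ((min_le_left _ _).trans (min_le_left _ _))
  have := (Nat.le_floor_iff' hk).mp hfloor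
  rw [le_div_iff₀ hlam] at this
  linarith

lemma Kfun_anti {n m q : ℕ} {lam lam' : ℝ} (hlam' : 0 < lam') (hle : lam' ≤ lam) :
    Kfun n m q lam ≤ Kfun n m q lam' := by
  have hfloor : ⌊(((n * m : ℕ) : ℝ) - 1) / lam⌋₊ ≤ ⌊(((n * m : ℕ) : ℝ) - 1) / lam'⌋₊ := by
    rcases le_or_gt 0 (((n * m : ℕ) : ℝ) - 1) with h | h
    · exact Nat.floor_le_floor (div_le_div_of_nonneg_left h hlam' hle)
    · rw [Nat.floor_of_nonpos (div_nonpos_of_nonpos_of_nonneg h.le (hlam'.le.trans hle))]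
      exact Nat.zero_le _
  exact min_le_min_right _ (min_le_min_right _ hfloor)

lemma khat_anti {n m q : ℕ} (Y : Matrix (Fin n) (Fin m) ℝ) (P : Matrix (Fin n) (Fin n) ℝ)
    {lam lam' : ℝ} (hlam : 0 < lam) (hlam' : 0 < lam') (hle : lam' ≤ lam) :
    khat Y P q lam ≤ khat Y P q lam' := by
  unfold khat
  simp only [Finset.sum_boole, Nat.cast_id]
  apply Finset.card_le_card
  intro k hk
  simp only [Finset.mem_filter, Finset.mem_Icc] at hk ⊢
  obtain ⟨⟨hk1, hkK⟩, hsel⟩ := hk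
  refine ⟨⟨hk1, hkK.trans (Kfun_anti hlam' hle)⟩, le_trans ?_ hsel⟩
  exact mul_div_sub_mul_le_of_le (Nat.cast_nonneg _) (frob2_nonneg _) (Nat.cast_nonneg _) hle
    (mul_lt_of_le_Kfun hlam (by omega) hkK)

theorem statement_11_general
    {n m q : ℕ}
    (Y : Matrix (Fin n) (Fin m) ℝ)
    (P : Matrix (Fin n) (Fin n) ℝ)
    (lam : ℝ) (hlam : 0 < lam)
    (lam' : ℝ) (hlam'0 : 0 < lam') (hlam' : lam' < lam)
    (i j : ℕ) (hij : i < j) (hjK : j ≤ Kfun n m q lam)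
    (hpos : 0 < frob2 (Y - trunc (P * Y) j)) :
    ((frob2 (Y - trunc (P * Y) j) / (((n * m : ℕ) : ℝ) - lam * j) ≤
        frob2 (Y - trunc (P * Y) i) / (((n * m : ℕ) : ℝ) - lam * i) →
      frob2 (Y - trunc (P * Y) j) / (((n * m : ℕ) : ℝ) - lam' * j) <
        frob2 (Y - trunc (P * Y) i) / (((n * m : ℕ) : ℝ) - lam' * i)) ∧
    khat Y P q lam ≤ khat Y P q lam') :=
  ⟨div_sub_mul_lt_div_sub_mul_of_le hlam.le hlam' (Nat.cast_nonneg i) (by exact_mod_cast hij)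
      (mul_lt_of_le_Kfun hlam (by omega) hjK) hpos,
    khat_anti Y P hlam hlam'0 hlam'.le⟩

theorem statement_11
    {n m p q : ℕ}
    (X : Matrix (Fin n) (Fin p) ℝ) (A : Matrix (Fin p) (Fin m) ℝ)
    (E Y : Matrix (Fin n) (Fin m) ℝ)
    (P : Matrix (Fin n) (Fin n) ℝ)
    (hY : Y = X * A + E)
    (hP2 : P * P = P) (hPt : P.transpose = P) (hPX : P * X = X)
    (hq : X.rank = q) (hPq : P.rank = q)
    (lam : ℝ) (hlam : 0 < lam)
    (lam' : ℝ) (hlam'0 : 0 < lam') (hlam' : lam' < lam)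
    (i j : ℕ) (hij : i < j) (hjK : j ≤ Kfun n m q lam)
    (hpos : 0 < frob2 (Y - trunc (P * Y) j)) :
    ((frob2 (Y - trunc (P * Y) j) / (((n * m : ℕ) : ℝ) - lam * j) ≤
        frob2 (Y - trunc (P * Y) i) / (((n * m : ℕ) : ℝ) - lam * i) →
      frob2 (Y - trunc (P * Y) j) / (((n * m : ℕ) : ℝ) - lam' * j) <
        frob2 (Y - trunc (P * Y) i) / (((n * m : ℕ) : ℝ) - lam' * i)) ∧
    khat Y P q lam ≤ khat Y P q lam') :=
  statement_11_general Y P lam hlam lam' hlam'0 hlam' i j hij hjK hpos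

end
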